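/- arXiv:2604.01771 — 4 statements merged into one kernel-verified Lean document; each statement's English description precedes it below -/
import Mathlib

section
/- Let θmax be a real number with 0 < θmax ≤ π and set k = (1 - cos θmax)/θmax². Then for every real θ with |θ| ≤ θmax: (i) cos θmax ≤ 1 - k·θ² ≤ 1, and (ii) cos θ ≤ 1 - k·θ², with equality in (ii) if and only if θ = 0 or |θ| = θmax. -/
open Real

/-- `sin x / x` is strictly decreasing on `(0, π/2]`, in product form. -/
lemma sinc_strict_anti {x y : ℝ} (hx : 0 < x) (hxy : x < y) (hy : y ≤ π / 2) :
    x * Real.sin y < y * Real.sin x := by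
  have hxpi2 : x < π / 2 := lt_of_lt_of_le hxy hy
  have hcx : 0 < Real.cos x := Real.cos_pos_of_mem_Ioo ⟨by linarith [Real.pi_pos], hxpi2⟩
  have hsx : 0 < Real.sin x := Real.sin_pos_of_pos_of_lt_pi hx (by linarith [Real.pi_pos])
  have htan : x < Real.tan x := Real.lt_tan hx hxpi2
  have hxcs : x * Real.cos x < Real.sin x := by
    rw [Real.tan_eq_sin_div_cos] at htan
    calc x * Real.cos x < Real.sin x / Real.cos x * Real.cos x := by
          exact mul_lt_mul_of_pos_right htan hcx
      _ = Real.sin x := by field_simp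
  have hsiny : Real.sin y = Real.sin x * Real.cos (y - x) + Real.cos x * Real.sin (y - x) := by
    rw [← Real.sin_add]; ring_nf
  have h1 : Real.cos (y - x) ≤ 1 := Real.cos_le_one _
  have h2 : Real.sin (y - x) ≤ y - x := Real.sin_le (by linarith)
  have h3 : Real.sin y ≤ Real.sin x + Real.cos x * (y - x) := by
    rw [hsiny]
    have := mul_le_mul_of_nonneg_left h1 hsx.le
    have := mul_le_mul_of_nonneg_left h2 hcx.le
    nlinarith
  calc x * Real.sin y ≤ x * (Real.sin x + Real.cos x * (y - x)) :=
        mul_le_mul_of_nonneg_left h3 hx.le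
    _ = x * Real.sin x + (x * Real.cos x) * (y - x) := by ring
    _ < x * Real.sin x + Real.sin x * (y - x) := by nlinarith
    _ = y * Real.sin x := by ring

lemma one_sub_cos_eq (x : ℝ) : 1 - Real.cos x = 2 * Real.sin (x / 2) ^ 2 := by
  have h := Real.cos_two_mul (x / 2)
  have h2 := Real.sin_sq_add_cos_sq (x / 2)
  have : (2 : ℝ) * (x / 2) = x := by ring
  rw [this] at h
  nlinarith

/-- Strict comparison of `(1 - cos)` ratios: for `0 < a < b ≤ π`,
`b² (1 - cos a) > a² (1 - cos b)`. -/
lemma key_strict {a b : ℝ} (ha : 0 < a) (hab : a < b) (hb : b ≤ π) :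
    a ^ 2 * (1 - Real.cos b) < b ^ 2 * (1 - Real.cos a) := by
  have h := sinc_strict_anti (x := a / 2) (y := b / 2) (by linarith) (by linarith) (by linarith)
  have hsa : 0 < Real.sin (a / 2) :=
    Real.sin_pos_of_pos_of_lt_pi (by linarith) (by linarith [Real.pi_pos])
  have hsb : 0 < Real.sin (b / 2) :=
    Real.sin_pos_of_pos_of_lt_pi (by linarith) (by nlinarith [Real.pi_pos])
  have hA : 0 < a / 2 * Real.sin (b / 2) := by positivity
  have hsq : (a / 2 * Real.sin (b / 2)) ^ 2 < (b / 2 * Real.sin (a / 2)) ^ 2 := by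
    nlinarith
  rw [one_sub_cos_eq a, one_sub_cos_eq b]
  nlinarith

/-- Validity and tightness of the LPAC cosine relaxation: for `0 < θmax ≤ π` and
`k = (1 - cos θmax)/θmax²`, for every `θ` with `|θ| ≤ θmax`:
(i) `cos θmax ≤ 1 - k·θ² ≤ 1`, and (ii) `cos θ ≤ 1 - k·θ²` with equality iff
`θ = 0` or `|θ| = θmax`. -/
theorem lpac_cosine_relaxation_valid (θmax : ℝ) (hpos : 0 < θmax) (hle : θmax ≤ Real.pi)
    (θ : ℝ) (hθ : |θ| ≤ θmax) :
    (Real.cos θmax ≤ 1 - (1 - Real.cos θmax) / θmax ^ 2 * θ ^ 2 ∧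
      1 - (1 - Real.cos θmax) / θmax ^ 2 * θ ^ 2 ≤ 1) ∧
    Real.cos θ ≤ 1 - (1 - Real.cos θmax) / θmax ^ 2 * θ ^ 2 ∧
    (Real.cos θ = 1 - (1 - Real.cos θmax) / θmax ^ 2 * θ ^ 2 ↔ θ = 0 ∨ |θ| = θmax) := by
  have hne : θmax ≠ 0 := hpos.ne'
  have hcle : Real.cos θmax ≤ 1 := Real.cos_le_one _
  have hk : 0 ≤ (1 - Real.cos θmax) / θmax ^ 2 := by
    apply div_nonneg (by linarith) (by positivity)
  have hθsq : θ ^ 2 ≤ θmax ^ 2 := by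
    have := abs_nonneg θ
    nlinarith [sq_abs θ]
  have hktop : (1 - Real.cos θmax) / θmax ^ 2 * θmax ^ 2 = 1 - Real.cos θmax := by
    field_simp
  -- main strict inequality for 0 < |θ| < θmax
  have hstrict : ∀ t : ℝ, 0 < t → t < θmax →
      Real.cos t < 1 - (1 - Real.cos θmax) / θmax ^ 2 * t ^ 2 := by
    intro t ht htm
    have h := key_strict ht htm hle
    have h2 : (1 - Real.cos θmax) / θmax ^ 2 * t ^ 2 < 1 - Real.cos t := by
      rw [div_mul_eq_mul_div, div_lt_iff₀ (by positivity)]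
      nlinarith
    linarith
  have habs : Real.cos θ = Real.cos |θ| := (Real.cos_abs θ).symm
  constructor
  · constructor
    · have : (1 - Real.cos θmax) / θmax ^ 2 * θ ^ 2 ≤
          (1 - Real.cos θmax) / θmax ^ 2 * θmax ^ 2 := mul_le_mul_of_nonneg_left hθsq hk
      rw [hktop] at this; linarith
    · nlinarith [mul_nonneg hk (sq_nonneg θ)]
  · rcases eq_or_lt_of_le (abs_nonneg θ) with h0 | h0
    · -- θ = 0
      have hθ0 : θ = 0 := abs_eq_zero.mp h0.symm
      subst hθ0
      simp [Real.cos_zero]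
    · rcases eq_or_lt_of_le hθ with heq | hlt
      · -- |θ| = θmax
        have : θ ^ 2 = θmax ^ 2 := by rw [← sq_abs, heq]
        rw [habs, heq, this, hktop]
        constructor
        · linarith
        · constructor
          · intro; right; rfl
          · intro; linarith
      · -- 0 < |θ| < θmax : strict
        have hs := hstrict |θ| h0 hlt
        rw [sq_abs] at hs
        rw [habs] at *
        refine ⟨hs.le, ?_⟩
        constructor
        · intro h; exact absurd h hs.ne
        · rintro (h | h)
          · subst h; simp at h0
          · exact absurd h hlt.ne
end

section
/- Let g, b, θmax ∈ ℝ with g ≥ 0 and θmax > 0, and set k = (1 - cos θmax)/θmax². Let v_n, v_m, θ, ĉ ∈ ℝ satisfy ĉ ≤ 1 - k·θ². Define the LPAC active power flows p_{nm} = g(v_n - v_m) + g(1 - ĉ) - b·θ and p_{mn} = g(v_m - v_n) + g(1 - ĉ) + b·θ. Then p_{nm} + p_{mn} = 2g(1 - ĉ) ≥ 2g·k·θ² ≥ 0. -/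
lemma one_sub_cos_div_sq_nonneg (x y : ℝ) : 0 ≤ (1 - Real.cos x) / y ^ 2 :=
  div_nonneg (sub_nonneg.mpr (Real.cos_le_one x)) (sq_nonneg y)

theorem lpac_active_losses_general (g b θmax : ℝ) (hg : 0 ≤ g)
    (vn vm θ chat : ℝ) (hchat : chat ≤ 1 - (1 - Real.cos θmax) / θmax ^ 2 * θ ^ 2) :
    (g * (vn - vm) + g * (1 - chat) - b * θ) + (g * (vm - vn) + g * (1 - chat) + b * θ)
      = 2 * g * (1 - chat) ∧
    2 * g * (1 - chat) ≥ 2 * g * ((1 - Real.cos θmax) / θmax ^ 2) * θ ^ 2 ∧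
    2 * g * ((1 - Real.cos θmax) / θmax ^ 2) * θ ^ 2 ≥ 0 := by
  have hk := one_sub_cos_div_sq_nonneg θmax θmax
  have h2g : 0 ≤ 2 * g := by positivity
  refine ⟨by ring, ?_, mul_nonneg (mul_nonneg h2g hk) (sq_nonneg θ)⟩
  calc 2 * g * ((1 - Real.cos θmax) / θmax ^ 2) * θ ^ 2
      = 2 * g * ((1 - Real.cos θmax) / θmax ^ 2 * θ ^ 2) := by ring
    _ ≤ 2 * g * (1 - chat) := mul_le_mul_of_nonneg_left (by linarith) h2g

/-- LPAC transmission losses: exact expression and analytical lower bound. -/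
theorem lpac_active_losses (g b θmax : ℝ) (hg : 0 ≤ g) (hθmax : 0 < θmax)
    (vn vm θ chat : ℝ) (hchat : chat ≤ 1 - (1 - Real.cos θmax) / θmax ^ 2 * θ ^ 2) :
    (g * (vn - vm) + g * (1 - chat) - b * θ) + (g * (vm - vn) + g * (1 - chat) + b * θ)
      = 2 * g * (1 - chat) ∧
    2 * g * (1 - chat) ≥ 2 * g * ((1 - Real.cos θmax) / θmax ^ 2) * θ ^ 2 ∧
    2 * g * ((1 - Real.cos θmax) / θmax ^ 2) * θ ^ 2 ≥ 0 :=
  lpac_active_losses_general g b θmax hg vn vm θ chat hchat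
end

section
/- Let g, b, bsh, θmax ∈ ℝ with b ≤ 0 and θmax > 0, and set k = (1 - cos θmax)/θmax². Let v_n, v_m, θ, ĉ ∈ ℝ satisfy ĉ ≤ 1 - k·θ². Define the LPAC reactive power flows q_{nm} = -(bsh/2)(2v_n - 1) - b(v_n - v_m) - b(1 - ĉ) - g·θ and q_{mn} = -(bsh/2)(2v_m - 1) - b(v_m - v_n) - b(1 - ĉ) + g·θ. Then q_{nm} + q_{mn} = -bsh·(v_n + v_m - 1) - 2b(1 - ĉ) ≥ -bsh·(v_n + v_m - 1) - 2b·k·θ². -/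
theorem lpac_reactive_demand_general (g b bsh θmax : ℝ) (hb : b ≤ 0)
    (vn vm θ chat : ℝ) (hchat : chat ≤ 1 - (1 - Real.cos θmax) / θmax ^ 2 * θ ^ 2) :
    (-(bsh / 2) * (2 * vn - 1) - b * (vn - vm) - b * (1 - chat) - g * θ) +
      (-(bsh / 2) * (2 * vm - 1) - b * (vm - vn) - b * (1 - chat) + g * θ)
      = -bsh * (vn + vm - 1) - 2 * b * (1 - chat) ∧
    -bsh * (vn + vm - 1) - 2 * b * (1 - chat)
      ≥ -bsh * (vn + vm - 1) - 2 * b * ((1 - Real.cos θmax) / θmax ^ 2) * θ ^ 2 := by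
  refine ⟨by ring, ?_⟩
  have hslack : (1 - Real.cos θmax) / θmax ^ 2 * θ ^ 2 ≤ 1 - chat := by linarith
  have hscaled := mul_le_mul_of_nonneg_left hslack (by linarith : 0 ≤ -2 * b)
  linarith

/-- LPAC reactive power demand of a branch: exact expression and analytical lower bound. -/
theorem lpac_reactive_demand (g b bsh θmax : ℝ) (hb : b ≤ 0) (hθmax : 0 < θmax)
    (vn vm θ chat : ℝ) (hchat : chat ≤ 1 - (1 - Real.cos θmax) / θmax ^ 2 * θ ^ 2) :
    (-(bsh / 2) * (2 * vn - 1) - b * (vn - vm) - b * (1 - chat) - g * θ) +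
      (-(bsh / 2) * (2 * vm - 1) - b * (vm - vn) - b * (1 - chat) + g * θ)
      = -bsh * (vn + vm - 1) - 2 * b * (1 - chat) ∧
    -bsh * (vn + vm - 1) - 2 * b * (1 - chat)
      ≥ -bsh * (vn + vm - 1) - 2 * b * ((1 - Real.cos θmax) / θmax ^ 2) * θ ^ 2 :=
  lpac_reactive_demand_general g b bsh θmax hb vn vm θ chat hchat
end

section
/- Let pmax ≥ 0. For all real p, q with 0 ≤ p, -0.4·pmax ≤ q ≤ 0.6·pmax, p ≤ (1/2)·q + pmax, and p ≤ -(1/3)·q + pmax, one has p² + q² ≤ pmax². -/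
/-!
On each side of the axis `q = 0` the capability curve is a single line `p = pmax - c |q|`
(with `c = 1/3` for `q ≥ 0` and `c = 1/2` for `q ≤ 0`). Such a line is a chord of the circle
of radius `pmax`, cutting it at `|q| = 0` and `|q| = 2 c pmax / (1 + c²)`, and the reactive
limits keep `|q|` between these two values, where the chord lies inside the disc.
-/

theorem sq_add_sq_le_sq_of_le_chord {r c p t : ℝ} (hp : 0 ≤ p) (ht : 0 ≤ t)
    (hpt : p ≤ r - c * t) (htc : (1 + c ^ 2) * t ≤ 2 * c * r) :
    p ^ 2 + t ^ 2 ≤ r ^ 2 :=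
  calc p ^ 2 + t ^ 2 ≤ (r - c * t) ^ 2 + t ^ 2 := by gcongr
    _ = r ^ 2 - t * (2 * c * r - (1 + c ^ 2) * t) := by ring
    _ ≤ r ^ 2 := sub_le_self _ (mul_nonneg ht (sub_nonneg.2 htc))

theorem dcurve_capability_apparent_power_general (pmax : ℝ)
    (p q : ℝ) (hp : 0 ≤ p)
    (hq₁ : -(0.4 * pmax) ≤ q) (hq₂ : q ≤ 0.6 * pmax)
    (hup₁ : p ≤ (1 / 2) * q + pmax) (hup₂ : p ≤ -(1 / 3) * q + pmax) :
    p ^ 2 + q ^ 2 ≤ pmax ^ 2 := by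
  rcases le_total 0 q with hq | hq
  · exact sq_add_sq_le_sq_of_le_chord (c := 1 / 3) hp hq (by linarith) (by norm_num; linarith)
  · simpa only [neg_sq] using
      sq_add_sq_le_sq_of_le_chord (c := 1 / 2) (t := -q) hp (by linarith) (by linarith)
        (by norm_num; linarith)

/-- Every operating point of the 'd-curve' PQ-capability polytope has apparent power
at most the nominal rating `pmax`. -/
theorem dcurve_capability_apparent_power (pmax : ℝ) (hpmax : 0 ≤ pmax)
    (p q : ℝ) (hp : 0 ≤ p)
    (hq₁ : -(0.4 * pmax) ≤ q) (hq₂ : q ≤ 0.6 * pmax)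
    (hup₁ : p ≤ (1 / 2) * q + pmax) (hup₂ : p ≤ -(1 / 3) * q + pmax) :
    p ^ 2 + q ^ 2 ≤ pmax ^ 2 :=
  dcurve_capability_apparent_power_general pmax p q hp hq₁ hq₂ hup₁ hup₂
end
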